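/- Let γ be an orthogonal linear map of a finite-dimensional real inner product space V such that γ has no nonzero fixed vector (i.e. 1 is not an eigenvalue of γ). Then det(1 − γ) > 0. -/

import Mathlib

/-!
Along the segment `t ↦ 1 - t γ`, `t ∈ [0, 1]`, the determinant is continuous, equals `1` at
`t = 0` and never vanishes: for `t < 1` the map `t γ` strictly shrinks nonzero vectors, and at
`t = 1` a kernel vector would be a fixed vector of `γ`. By the intermediate value theorem the
determinant stays positive up to `t = 1`.
-/

open Set

theorem IsPreconnected.pos_of_continuousOn_of_ne_zero {s : Set ℝ} (hs : IsPreconnected s)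
    {f : ℝ → ℝ} (hf : ContinuousOn f s) (hne : ∀ t ∈ s, f t ≠ 0) {a b : ℝ} (ha : a ∈ s)
    (hfa : 0 < f a) (hb : b ∈ s) : 0 < f b := by
  by_contra! hfb
  obtain ⟨t, ht, hft⟩ := hs.intermediate_value hb ha hf ⟨hfb, hfa.le⟩
  exact hne t ht hft

theorem LinearIsometry.smul_apply_ne_self {𝕜 E : Type*} [NormedField 𝕜] [NormedAddCommGroup E]
    [NormedSpace 𝕜 E] (γ : E →ₗᵢ[𝕜] E) {t : 𝕜} (ht : ‖t‖ ≠ 1) {v : E} (hv : v ≠ 0) :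
    t • γ v ≠ v := by
  intro h
  have hnorm : ‖t‖ * ‖v‖ = 1 * ‖v‖ := by
    simpa [norm_smul] using congrArg norm h
  exact ht (mul_right_cancel₀ (norm_ne_zero_iff.mpr hv) hnorm)

theorem continuous_det_id_sub_smul {𝕜 E : Type*} [NontriviallyNormedField 𝕜] [CompleteSpace 𝕜]
    [NormedAddCommGroup E] [NormedSpace 𝕜 E] [FiniteDimensional 𝕜 E] (f : E →ₗ[𝕜] E) :
    Continuous fun t : 𝕜 => LinearMap.det (LinearMap.id - t • f) :=
  ContinuousLinearMap.continuous_det.comp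
    (continuous_const.sub (continuous_id.smul continuous_const) :
      Continuous fun t : 𝕜 => ContinuousLinearMap.id 𝕜 E - t • LinearMap.toContinuousLinearMap f)

theorem LinearIsometry.det_id_sub_smul_ne_zero {V : Type*} [NormedAddCommGroup V]
    [NormedSpace ℝ V] [FiniteDimensional ℝ V] (γ : V →ₗᵢ[ℝ] V)
    (hfix : ∀ v : V, γ v = v → v = 0) {t : ℝ} (ht : t ∈ Icc (0 : ℝ) 1) :
    LinearMap.det (LinearMap.id - t • γ.toLinearMap) ≠ 0 := by
  rw [Ne, LinearMap.det_eq_zero_iff_ker_ne_bot, not_not, LinearMap.ker_eq_bot']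
  intro v hv
  have hfixed : t • γ v = v := (sub_eq_zero.mp (hv : v - t • γ v = 0)).symm
  rcases ht.2.lt_or_eq with ht1 | rfl
  · by_contra hv0
    refine γ.smul_apply_ne_self ?_ hv0 hfixed
    rw [Real.norm_of_nonneg ht.1]
    exact ht1.ne
  · exact hfix v (by simpa using hfixed)

theorem stmt_0 {V : Type*} [NormedAddCommGroup V] [InnerProductSpace ℝ V]
    [FiniteDimensional ℝ V] (γ : V →ₗᵢ[ℝ] V)
    (hfix : ∀ v : V, γ v = v → v = 0) :
    0 < LinearMap.det ((LinearMap.id : V →ₗ[ℝ] V) - γ.toLinearMap) := by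
  have hpos := isPreconnected_Icc.pos_of_continuousOn_of_ne_zero
    (continuous_det_id_sub_smul γ.toLinearMap).continuousOn
    (fun t ht => γ.det_id_sub_smul_ne_zero hfix ht)
    (left_mem_Icc.mpr zero_le_one) (by simp) (right_mem_Icc.mpr zero_le_one)
  simpa using hpos
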